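/- For probability measures μ, ν on ℝ with finite p-th moment (p ≥ 1), the p-Wasserstein distance satisfies W_p^p(μ, ν) = ∫_0^1 |F_μ^{-1}(t) − F_ν^{-1}(t)|^p dt, where F_μ^{-1}, F_ν^{-1} are the quantile functions (generalized inverses of the CDFs) of μ and ν. -/

import Mathlib

open MeasureTheory Filter Topology Metric
open scoped ENNReal

noncomputable def Wcost {X : Type*} [MeasurableSpace X] [PseudoMetricSpace X] (p : ℝ)
    (μ ν : Measure X) : ℝ≥0∞ :=
  ⨅ γ ∈ {γ : Measure (X × X) | γ.map Prod.fst = μ ∧ γ.map Prod.snd = ν},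
    ∫⁻ z, ENNReal.ofReal (dist z.1 z.2) ^ p ∂γ

noncomputable def Wp {X : Type*} [MeasurableSpace X] [PseudoMetricSpace X] (p : ℝ)
    (μ ν : Measure X) : ℝ≥0∞ := (Wcost p μ ν) ^ (1 / p)

/-- Cumulative distribution function of a measure on ℝ. -/
noncomputable def cdf (μ : Measure ℝ) (t : ℝ) : ℝ := (μ (Set.Iic t)).toReal

/-- Quantile function (generalized inverse of the CDF). -/
noncomputable def quantile (μ : Measure ℝ) (t : ℝ) : ℝ := sInf {s : ℝ | t ≤ cdf μ s}

open Set

section aux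

lemma cdf_eq_pcdf (μ : Measure ℝ) [IsProbabilityMeasure μ] (t : ℝ) :
    cdf μ t = ProbabilityTheory.cdf μ t := (ProbabilityTheory.cdf_eq_real μ t).symm

lemma cdf_mono (μ : Measure ℝ) [IsProbabilityMeasure μ] : Monotone (cdf μ) := by
  intro a b hab
  rw [cdf_eq_pcdf, cdf_eq_pcdf]
  exact ProbabilityTheory.monotone_cdf μ hab

lemma quantile_le_iff {μ : Measure ℝ} [IsProbabilityMeasure μ] {t s : ℝ}
    (h0 : 0 < t) (h1 : t < 1) : quantile μ t ≤ s ↔ t ≤ cdf μ s := by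
  set S := {s : ℝ | t ≤ cdf μ s} with hS
  have hne : S.Nonempty := by
    obtain ⟨s₀, hs₀⟩ := ((ProbabilityTheory.tendsto_cdf_atTop μ).eventually
      (eventually_ge_nhds h1)).exists
    exact ⟨s₀, by rwa [hS, mem_setOf_eq, cdf_eq_pcdf]⟩
  have hbdd : BddBelow S := by
    obtain ⟨s₁, hs₁⟩ := ((ProbabilityTheory.tendsto_cdf_atBot μ).eventually
      (eventually_lt_nhds h0)).exists
    refine ⟨s₁, fun s hs => ?_⟩
    by_contra hc
    push_neg at hc
    have h1 : cdf μ s ≤ cdf μ s₁ := cdf_mono μ hc.le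
    rw [cdf_eq_pcdf, cdf_eq_pcdf] at h1
    have h2 : t ≤ cdf μ s := hs
    rw [cdf_eq_pcdf] at h2
    linarith
  have key : t ≤ cdf μ (sInf S) := by
    rw [cdf_eq_pcdf]
    have hrc : ContinuousWithinAt (ProbabilityTheory.cdf μ) (Ioi (sInf S)) (sInf S) :=
      ((ProbabilityTheory.cdf μ).right_continuous (sInf S)).mono Ioi_subset_Ici_self
    have hten : Tendsto (ProbabilityTheory.cdf μ) (𝓝[>] (sInf S))
        (𝓝 (ProbabilityTheory.cdf μ (sInf S))) := hrc
    refine ge_of_tendsto hten ?_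
    filter_upwards [self_mem_nhdsWithin] with r hr
    obtain ⟨s, hsS, hsr⟩ := (csInf_lt_iff hbdd hne).mp hr
    have := cdf_mono μ hsr.le
    rw [cdf_eq_pcdf, cdf_eq_pcdf] at this
    exact le_trans (by rwa [hS, mem_setOf_eq, cdf_eq_pcdf] at hsS) this
  constructor
  · intro h
    exact le_trans key (cdf_mono μ h)
  · intro h
    exact csInf_le hbdd h


lemma cdf_nonneg' (μ : Measure ℝ) (s : ℝ) : 0 ≤ cdf μ s := ENNReal.toReal_nonneg

lemma cdf_le_one' (μ : Measure ℝ) [IsProbabilityMeasure μ] (s : ℝ) : cdf μ s ≤ 1 := by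
  rw [cdf]
  exact ENNReal.toReal_le_of_le_ofReal one_pos.le (by simpa using prob_le_one)

lemma ofReal_cdf' (μ : Measure ℝ) [IsProbabilityMeasure μ] (s : ℝ) :
    ENNReal.ofReal (cdf μ s) = μ (Iic s) :=
  ENNReal.ofReal_toReal (measure_ne_top μ _)

/-- measurable version of the quantile function -/
noncomputable def qh (μ : Measure ℝ) (t : ℝ) : ℝ :=
  if t ∈ Set.Ioo (0:ℝ) 1 then quantile μ t else 0

lemma qh_eq {μ : Measure ℝ} {t : ℝ} (ht : t ∈ Set.Ioo (0:ℝ) 1) : qh μ t = quantile μ t :=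
  if_pos ht

lemma qh_le_iff {μ : Measure ℝ} [IsProbabilityMeasure μ] {t s : ℝ}
    (ht : t ∈ Set.Ioo (0:ℝ) 1) : qh μ t ≤ s ↔ t ≤ cdf μ s := by
  rw [qh_eq ht, quantile_le_iff ht.1 ht.2]

lemma measurable_qh (μ : Measure ℝ) [IsProbabilityMeasure μ] : Measurable (qh μ) := by
  apply measurable_of_Iic
  intro s
  have : qh μ ⁻¹' Iic s =
      (Ioo (0:ℝ) 1 ∩ Iic (cdf μ s)) ∪ ((Ioo (0:ℝ) 1)ᶜ ∩ {t | (0:ℝ) ≤ s}) := by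
    ext t
    by_cases ht : t ∈ Ioo (0:ℝ) 1
    · simp only [mem_preimage, mem_Iic, mem_union, mem_inter_iff, ht, mem_compl_iff,
        not_true_eq_false, false_and, or_false, true_and, qh_le_iff ht]
    · have h0 : qh μ t = 0 := if_neg ht
      simp only [mem_preimage, mem_Iic, h0, mem_union, mem_inter_iff, ht,
        false_and, false_or, mem_compl_iff, not_false_eq_true, true_and, mem_setOf_eq]
  rw [this]
  by_cases h0s : (0:ℝ) ≤ s
  · simp only [h0s, setOf_true, inter_univ]
    exact (measurableSet_Ioo.inter measurableSet_Iic).union measurableSet_Ioo.compl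
  · simp only [h0s, setOf_false, inter_empty, union_empty]
    exact measurableSet_Ioo.inter measurableSet_Iic

lemma vol_Ioo_inter {a b : ℝ} (ha0 : 0 ≤ a) (ha1 : a ≤ 1) (hb0 : 0 ≤ b) :
    volume (Ioo (0:ℝ) 1 ∩ (Iic a ∩ Ioi b)) = ENNReal.ofReal a - ENNReal.ofReal b := by
  have hIoc : Iic a ∩ Ioi b = Ioc b a := by rw [inter_comm, Ioi_inter_Iic]
  rw [hIoc]
  rcases le_or_gt a b with hab | hab
  · rw [Ioc_eq_empty (by exact fun h => absurd hab (not_le.mpr h)), inter_empty, measure_empty]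
    exact (tsub_eq_zero_of_le (ENNReal.ofReal_le_ofReal hab)).symm
  · rcases eq_or_lt_of_le ha1 with rfl | ha1'
    · have : Ioo (0:ℝ) 1 ∩ Ioc b 1 = Ioo b 1 := by
        ext t
        simp only [mem_inter_iff, mem_Ioo, mem_Ioc]
        constructor
        · rintro ⟨⟨_, ht1⟩, htb, _⟩; exact ⟨htb, ht1⟩
        · rintro ⟨htb, ht1⟩; exact ⟨⟨lt_of_le_of_lt hb0 htb, ht1⟩, htb, ht1.le⟩
      rw [this, Real.volume_Ioo, ← ENNReal.ofReal_sub _ hb0]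
    · have : Ioo (0:ℝ) 1 ∩ Ioc b a = Ioc b a := by
        refine inter_eq_self_of_subset_right (fun t ht => ?_)
        exact ⟨lt_of_le_of_lt hb0 ht.1, lt_of_le_of_lt ht.2 ha1'⟩
      rw [this, Real.volume_Ioc, ← ENNReal.ofReal_sub _ hb0]

lemma vol_Ioo_inter_Iic {a : ℝ} (ha0 : 0 ≤ a) (ha1 : a ≤ 1) :
    volume (Ioo (0:ℝ) 1 ∩ Iic a) = ENNReal.ofReal a := by
  have : Ioo (0:ℝ) 1 ∩ Iic a = Ioo (0:ℝ) 1 ∩ (Iic a ∩ Ioi 0) := by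
    ext t
    simp only [mem_inter_iff, mem_Ioo, mem_Iic, mem_Ioi]
    tauto
  rw [this, vol_Ioo_inter ha0 ha1 le_rfl, ENNReal.ofReal_zero, tsub_zero]

lemma map_qh (μ : Measure ℝ) [IsProbabilityMeasure μ] :
    (volume.restrict (Ioo (0:ℝ) 1)).map (qh μ) = μ := by
  have hfin : IsFiniteMeasure ((volume.restrict (Ioo (0:ℝ) 1)).map (qh μ)) := by
    constructor
    rw [Measure.map_apply (measurable_qh μ) MeasurableSet.univ]
    simp [Real.volume_Ioo]
  refine @Measure.ext_of_Iic ℝ _ _ _ _ _ _ _ _ hfin (fun s => ?_)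
  rw [Measure.map_apply (measurable_qh μ) measurableSet_Iic,
    Measure.restrict_apply (measurable_qh μ measurableSet_Iic)]
  have : qh μ ⁻¹' Iic s ∩ Ioo (0:ℝ) 1 = Ioo (0:ℝ) 1 ∩ Iic (cdf μ s) := by
    ext t
    by_cases ht : t ∈ Ioo (0:ℝ) 1
    · simp only [mem_inter_iff, mem_preimage, mem_Iic, ht, and_true, true_and, qh_le_iff ht]
    · simp [ht]
  rw [this, vol_Ioo_inter_Iic (cdf_nonneg' μ s) (cdf_le_one' μ s), ofReal_cdf']


lemma rpow_lint_left {a b r : ℝ} (hab : a ≤ b) (hr : -1 < r) :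
    ∫⁻ t in Ioo a b, ENNReal.ofReal ((t - a) ^ r) =
      ENNReal.ofReal ((b - a) ^ (r + 1) / (r + 1)) := by
  have hr1 : (0:ℝ) < r + 1 := by linarith
  have hint : IntervalIntegrable (fun t => (t - a) ^ r) volume a b := by
    have h := (intervalIntegral.intervalIntegrable_rpow' (a := 0) (b := b - a) hr).comp_sub_right a
    simpa using h
  rw [Measure.restrict_congr_set Ioo_ae_eq_Ioc,
    ← ofReal_integral_eq_lintegral_ofReal hint.1 ?_]
  · congr 1
    rw [← intervalIntegral.integral_of_le hab]
    have h2 : (∫ t in a..b, (t - a) ^ r) = ∫ t in (a-a)..(b-a), t ^ r :=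
      intervalIntegral.integral_comp_sub_right (fun x => x ^ r) a
    rw [h2, sub_self, integral_rpow (Or.inl hr), Real.zero_rpow (ne_of_gt hr1), sub_zero]
  · filter_upwards [ae_restrict_mem measurableSet_Ioc] with t ht
    exact Real.rpow_nonneg (by linarith [ht.1]) r

lemma rpow_lint_right {a b r : ℝ} (hab : a ≤ b) (hr : -1 < r) :
    ∫⁻ t in Ico a b, ENNReal.ofReal ((b - t) ^ r) =
      ENNReal.ofReal ((b - a) ^ (r + 1) / (r + 1)) := by
  have hr1 : (0:ℝ) < r + 1 := by linarith
  have hint : IntervalIntegrable (fun t => (b - t) ^ r) volume a b := by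
    have h := (intervalIntegral.intervalIntegrable_rpow' (a := b - a) (b := b - b) hr).comp_sub_left b
    simpa using h
  rw [Measure.restrict_congr_set Ico_ae_eq_Ioc,
    ← ofReal_integral_eq_lintegral_ofReal hint.1 ?_]
  · congr 1
    rw [← intervalIntegral.integral_of_le hab]
    have h2 : (∫ t in a..b, (b - t) ^ r) = ∫ t in (b-b)..(b-a), t ^ r :=
      intervalIntegral.integral_comp_sub_left (fun x => x ^ r) b
    rw [h2, sub_self, integral_rpow (Or.inl hr), Real.zero_rpow (ne_of_gt hr1), sub_zero]
  · filter_upwards [ae_restrict_mem measurableSet_Ioc] with t ht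
    exact Real.rpow_nonneg (by linarith [ht.2]) r


noncomputable def kdens (p : ℝ) (w : ℝ × ℝ) : ℝ≥0∞ :=
  if w.1 < w.2 then ENNReal.ofReal (p * (p-1) * (w.2 - w.1) ^ (p-2)) else 0

noncomputable def kmeas (p : ℝ) : Measure (ℝ × ℝ) :=
  if p = 1 then Measure.map (fun u => (u, u)) volume
  else ((volume : Measure ℝ).prod volume).withDensity (kdens p)

def evset (x y : ℝ) : Set (ℝ × ℝ) := {w | (x ≤ w.1 ∧ w.2 < y) ∨ (y ≤ w.1 ∧ w.2 < x)}

lemma measurable_kdens (p : ℝ) : Measurable (kdens p) := by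
  unfold kdens
  exact Measurable.ite (measurableSet_lt measurable_fst measurable_snd)
    (ENNReal.measurable_ofReal.comp
      ((measurable_const.mul ((measurable_snd.sub measurable_fst).pow measurable_const))))
    measurable_const

lemma measurableSet_evset (x y : ℝ) : MeasurableSet (evset x y) :=
  ((measurableSet_le measurable_const measurable_fst).inter
    (measurableSet_lt measurable_snd measurable_const)).union
  ((measurableSet_le measurable_const measurable_fst).inter
    (measurableSet_lt measurable_snd measurable_const))

lemma evset_comm (x y : ℝ) : evset x y = evset y x := by
  ext w; exact or_comm

instance kmeas_sfinite (p : ℝ) : SFinite (kmeas p) := by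
  unfold kmeas
  split_ifs <;> infer_instance

lemma kmeas_evset {p : ℝ} (hp : 1 ≤ p) {x y : ℝ} (hxy : x ≤ y) :
    kmeas p (evset x y) = ENNReal.ofReal (|x - y| ^ p) := by
  have habs : |x - y| = y - x := by rw [abs_sub_comm, abs_of_nonneg (by linarith)]
  by_cases hp1 : p = 1
  · rw [kmeas, if_pos hp1]
    have hdiag : Measurable fun u : ℝ => (u, u) := measurable_id.prodMk measurable_id
    rw [Measure.map_apply hdiag (measurableSet_evset x y)]
    have : (fun u : ℝ => (u, u)) ⁻¹' evset x y = Ico x y := by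
      ext u
      simp only [mem_preimage, evset, mem_setOf_eq, mem_Ico]
      constructor
      · rintro (⟨h1, h2⟩ | ⟨h1, h2⟩)
        · exact ⟨h1, h2⟩
        · exact absurd (lt_of_lt_of_le h2 hxy) (not_lt.mpr h1)
      · exact fun h => Or.inl h
    rw [this, Real.volume_Ico, hp1, habs, Real.rpow_one]
  · have hp1' : 1 < p := lt_of_le_of_ne hp (Ne.symm hp1)
    have hc : (0:ℝ) ≤ p * (p-1) := by nlinarith
    rw [kmeas, if_neg hp1, withDensity_apply _ (measurableSet_evset x y),
      ← lintegral_indicator (measurableSet_evset x y)]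
    set R : Set (ℝ × ℝ) := {w | x ≤ w.1 ∧ w.1 < w.2 ∧ w.2 < y} with hR
    have hRmeas : MeasurableSet R :=
      (measurableSet_le measurable_const measurable_fst).inter
        ((measurableSet_lt measurable_fst measurable_snd).inter
          (measurableSet_lt measurable_snd measurable_const))
    set g : ℝ × ℝ → ℝ≥0∞ := fun w => ENNReal.ofReal (p * (p-1) * (w.2 - w.1) ^ (p-2)) with hg
    have hgmeas : Measurable g :=
      ENNReal.measurable_ofReal.comp
        (measurable_const.mul ((measurable_snd.sub measurable_fst).pow measurable_const))
    have hind : (evset x y).indicator (kdens p) = R.indicator g := by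
      funext w
      by_cases hRw : w ∈ R
      · rw [indicator_of_mem (show w ∈ evset x y from Or.inl ⟨hRw.1, hRw.2.2⟩),
          indicator_of_mem hRw, kdens, if_pos hRw.2.1]
      · by_cases hEw : w ∈ evset x y
        · rw [indicator_of_mem hEw, indicator_of_notMem hRw, kdens, if_neg]
          intro hlt
          rcases hEw with ⟨h1, h2⟩ | ⟨h1, h2⟩
          · exact hRw ⟨h1, hlt, h2⟩
          · linarith
        · rw [indicator_of_notMem hEw, indicator_of_notMem hRw]
    rw [hind, lintegral_prod _ ((hgmeas.indicator hRmeas).aemeasurable)]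
    have inner : ∀ u : ℝ, (∫⁻ v, R.indicator g (u, v)) =
        (Ico x y).indicator (fun u => ENNReal.ofReal (p * (y - u) ^ (p-1))) u := by
      intro u
      by_cases hu : u ∈ Ico x y
      · rw [indicator_of_mem hu]
        have h1 : (fun v => R.indicator g (u, v)) =
            (Ioo u y).indicator (fun v => ENNReal.ofReal (p * (p-1) * (v - u) ^ (p-2))) := by
          funext v
          by_cases hv : v ∈ Ioo u y
          · rw [indicator_of_mem (show (u,v) ∈ R from ⟨hu.1, hv.1, hv.2⟩), indicator_of_mem hv]
          · rw [indicator_of_notMem (fun hRw => hv ⟨hRw.2.1, hRw.2.2⟩), indicator_of_notMem hv]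
        rw [h1, lintegral_indicator measurableSet_Ioo]
        have h2 : ∀ v : ℝ, ENNReal.ofReal (p * (p-1) * (v - u) ^ (p-2)) =
            ENNReal.ofReal (p * (p-1)) * ENNReal.ofReal ((v - u) ^ (p-2)) := fun v =>
          ENNReal.ofReal_mul hc
        simp_rw [h2]
        rw [lintegral_const_mul' _ _ ENNReal.ofReal_ne_top,
          rpow_lint_left hu.2.le (by linarith), ← ENNReal.ofReal_mul hc]
        congr 1
        have : p - 2 + 1 = p - 1 := by ring
        rw [this]
        have hne : p - 1 ≠ 0 := by linarith
        field_simp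
      · rw [indicator_of_notMem hu]
        have h1 : (fun v => R.indicator g (u, v)) = fun _ => 0 := by
          funext v
          exact indicator_of_notMem (fun hRw => hu ⟨hRw.1, lt_trans hRw.2.1 hRw.2.2⟩) _
        rw [h1, lintegral_zero]
    rw [lintegral_congr inner, lintegral_indicator measurableSet_Ico]
    have h3 : ∀ u : ℝ, ENNReal.ofReal (p * (y - u) ^ (p-1)) =
        ENNReal.ofReal p * ENNReal.ofReal ((y - u) ^ (p-1)) := fun u =>
      ENNReal.ofReal_mul (by linarith)
    simp_rw [h3]
    rw [lintegral_const_mul' _ _ ENNReal.ofReal_ne_top, rpow_lint_right hxy (by linarith),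
      ← ENNReal.ofReal_mul (by linarith : (0:ℝ) ≤ p)]
    have : p - 1 + 1 = p := by ring
    rw [this, habs]
    congr 1
    field_simp

lemma kmeas_evset' {p : ℝ} (hp : 1 ≤ p) (x y : ℝ) :
    kmeas p (evset x y) = ENNReal.ofReal (|x - y| ^ p) := by
  rcases le_total x y with h | h
  · exact kmeas_evset hp h
  · rw [evset_comm, abs_sub_comm]
    exact kmeas_evset hp h

lemma kmeas_bad (p : ℝ) : kmeas p {w : ℝ × ℝ | w.2 < w.1} = 0 := by
  have hmeas : MeasurableSet {w : ℝ × ℝ | w.2 < w.1} :=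
    measurableSet_lt measurable_snd measurable_fst
  by_cases hp1 : p = 1
  · have hdiag : Measurable fun u : ℝ => (u, u) := measurable_id.prodMk measurable_id
    rw [kmeas, if_pos hp1, Measure.map_apply hdiag hmeas]
    convert measure_empty (μ := (volume : Measure ℝ))
    ext u
    simp
  · rw [kmeas, if_neg hp1, withDensity_apply _ hmeas]
    have h0 : ∀ w ∈ {w : ℝ × ℝ | w.2 < w.1}, kdens p w = 0 := fun w hw => by
      have hw' : w.2 < w.1 := hw
      simp only [kdens, if_neg (lt_asymm hw')]
    rw [setLIntegral_congr_fun_ae hmeas (ae_of_all _ h0), lintegral_zero]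


/-- the "discordance" set: pairs (x,y) that straddle the window (u,v]. -/
def dset (w : ℝ × ℝ) : Set (ℝ × ℝ) :=
  {z | (z.1 ≤ w.1 ∧ w.2 < z.2) ∨ (z.2 ≤ w.1 ∧ w.2 < z.1)}

lemma measurableSet_dset (w : ℝ × ℝ) : MeasurableSet (dset w) :=
  ((measurableSet_le measurable_fst measurable_const).inter
    (measurableSet_lt measurable_const measurable_snd)).union
  ((measurableSet_le measurable_snd measurable_const).inter
    (measurableSet_lt measurable_const measurable_fst))

lemma cost_eq {p : ℝ} (hp : 1 ≤ p) (γ : Measure (ℝ × ℝ)) [IsFiniteMeasure γ] :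
    ∫⁻ z, ENNReal.ofReal (dist z.1 z.2) ^ p ∂γ = ∫⁻ w, γ (dset w) ∂(kmeas p) := by
  set S : Set ((ℝ × ℝ) × (ℝ × ℝ)) :=
    {q | (q.1.1 ≤ q.2.1 ∧ q.2.2 < q.1.2) ∨ (q.1.2 ≤ q.2.1 ∧ q.2.2 < q.1.1)} with hS
  have hSmeas : MeasurableSet S :=
    ((measurableSet_le (measurable_fst.comp measurable_fst)
        (measurable_fst.comp measurable_snd)).inter
      (measurableSet_lt (measurable_snd.comp measurable_snd)
        (measurable_snd.comp measurable_fst))).union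
    ((measurableSet_le (measurable_snd.comp measurable_fst)
        (measurable_fst.comp measurable_snd)).inter
      (measurableSet_lt (measurable_snd.comp measurable_snd)
        (measurable_fst.comp measurable_fst)))
  have key : ∀ z : ℝ × ℝ, ENNReal.ofReal (dist z.1 z.2) ^ p =
      ∫⁻ w, S.indicator (fun _ => (1:ℝ≥0∞)) (z, w) ∂(kmeas p) := by
    intro z
    have h1 : ENNReal.ofReal (dist z.1 z.2) ^ p = ENNReal.ofReal (|z.1 - z.2| ^ p) := by
      rw [Real.dist_eq, ENNReal.ofReal_rpow_of_nonneg (abs_nonneg _) (by linarith)]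
    have h2 : (fun w => S.indicator (fun _ => (1:ℝ≥0∞)) (z, w)) =
        (evset z.1 z.2).indicator (fun _ => (1:ℝ≥0∞)) := by
      funext w; rfl
    have hev : MeasurableSet (evset z.1 z.2) :=
      ((measurableSet_le measurable_const measurable_fst).inter
        (measurableSet_lt measurable_snd measurable_const)).union
      ((measurableSet_le measurable_const measurable_fst).inter
        (measurableSet_lt measurable_snd measurable_const))
    rw [h1, ← kmeas_evset' hp, h2, lintegral_indicator hev, setLIntegral_one]
  calc ∫⁻ z, ENNReal.ofReal (dist z.1 z.2) ^ p ∂γ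
      = ∫⁻ z, ∫⁻ w, S.indicator (fun _ => (1:ℝ≥0∞)) (z, w) ∂(kmeas p) ∂γ :=
        lintegral_congr key
    _ = ∫⁻ w, ∫⁻ z, S.indicator (fun _ => (1:ℝ≥0∞)) (z, w) ∂γ ∂(kmeas p) := by
        apply lintegral_lintegral_swap
        exact (Measurable.indicator measurable_const hSmeas).aemeasurable
    _ = ∫⁻ w, γ (dset w) ∂(kmeas p) := by
        refine lintegral_congr (fun w => ?_)
        have h2 : (fun z => S.indicator (fun _ => (1:ℝ≥0∞)) (z, w)) =
            (dset w).indicator (fun _ => (1:ℝ≥0∞)) := by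
          funext z; rfl
        rw [h2, lintegral_indicator (measurableSet_dset w), setLIntegral_one]

lemma coupling_fst {γ : Measure (ℝ × ℝ)} {μ : Measure ℝ} (h1 : γ.map Prod.fst = μ) (u : ℝ) :
    γ {z : ℝ × ℝ | z.1 ≤ u} = μ (Iic u) := by
  rw [← h1, Measure.map_apply measurable_fst measurableSet_Iic]; rfl

lemma coupling_snd {γ : Measure (ℝ × ℝ)} {ν : Measure ℝ} (h2 : γ.map Prod.snd = ν) (u : ℝ) :
    γ {z : ℝ × ℝ | z.2 ≤ u} = ν (Iic u) := by
  rw [← h2, Measure.map_apply measurable_snd measurableSet_Iic]; rfl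

lemma coupling_finite {γ : Measure (ℝ × ℝ)} {μ : Measure ℝ} [IsProbabilityMeasure μ]
    (h1 : γ.map Prod.fst = μ) : IsProbabilityMeasure γ := by
  constructor
  have : γ (Prod.fst ⁻¹' (univ : Set ℝ)) = μ univ := by
    rw [← h1, Measure.map_apply measurable_fst MeasurableSet.univ]
  simpa using this

lemma dset_eq_union (u v : ℝ) :
    dset (u, v) = {z : ℝ × ℝ | z.1 ≤ u ∧ v < z.2} ∪ {z : ℝ × ℝ | z.2 ≤ u ∧ v < z.1} := rfl

lemma coupling_ge {γ : Measure (ℝ × ℝ)} {μ ν : Measure ℝ}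
    [IsProbabilityMeasure μ] [IsProbabilityMeasure ν]
    (h1 : γ.map Prod.fst = μ) (h2 : γ.map Prod.snd = ν) {u v : ℝ} (huv : u ≤ v) :
    (μ (Iic u) - min (μ (Iic u)) (ν (Iic v))) + (ν (Iic u) - min (μ (Iic v)) (ν (Iic u)))
      ≤ γ (dset (u, v)) := by
  have : IsProbabilityMeasure γ := coupling_finite h1
  have hAmeas : MeasurableSet {z : ℝ × ℝ | z.1 ≤ u ∧ v < z.2} :=
    (measurableSet_le measurable_fst measurable_const).inter
      (measurableSet_lt measurable_const measurable_snd)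
  have hBmeas : MeasurableSet {z : ℝ × ℝ | z.2 ≤ u ∧ v < z.1} :=
    (measurableSet_le measurable_snd measurable_const).inter
      (measurableSet_lt measurable_const measurable_fst)
  have hdisj : Disjoint {z : ℝ × ℝ | z.1 ≤ u ∧ v < z.2} {z : ℝ × ℝ | z.2 ≤ u ∧ v < z.1} := by
    rw [disjoint_left]
    rintro z ⟨hz1, _⟩ ⟨_, hz4⟩
    exact absurd (lt_of_le_of_lt (le_trans hz1 huv) hz4) (lt_irrefl z.1)
  rw [dset_eq_union, measure_union hdisj hBmeas]
  have hA : {z : ℝ × ℝ | z.1 ≤ u ∧ v < z.2} =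
      {z : ℝ × ℝ | z.1 ≤ u} \ {z : ℝ × ℝ | z.1 ≤ u ∧ z.2 ≤ v} := by
    ext z; simp only [mem_setOf_eq, mem_diff, not_and, not_le]; tauto
  have hB : {z : ℝ × ℝ | z.2 ≤ u ∧ v < z.1} =
      {z : ℝ × ℝ | z.2 ≤ u} \ {z : ℝ × ℝ | z.1 ≤ v ∧ z.2 ≤ u} := by
    ext z
    simp only [mem_setOf_eq, mem_diff, not_and, not_le]
    constructor
    · rintro ⟨h3, h4⟩
      exact ⟨h3, fun h5 => absurd (lt_of_lt_of_le h4 h5) (lt_irrefl v)⟩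
    · rintro ⟨h3, h5⟩
      refine ⟨h3, ?_⟩
      by_contra hc
      push_neg at hc
      exact absurd (h5 hc) (not_lt.mpr h3)
  have hCmeas : MeasurableSet {z : ℝ × ℝ | z.1 ≤ u ∧ z.2 ≤ v} :=
    (measurableSet_le measurable_fst measurable_const).inter
      (measurableSet_le measurable_snd measurable_const)
  have hDmeas : MeasurableSet {z : ℝ × ℝ | z.1 ≤ v ∧ z.2 ≤ u} :=
    (measurableSet_le measurable_fst measurable_const).inter
      (measurableSet_le measurable_snd measurable_const)
  have hgA : μ (Iic u) - min (μ (Iic u)) (ν (Iic v)) ≤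
      γ {z : ℝ × ℝ | z.1 ≤ u ∧ v < z.2} := by
    rw [hA, measure_diff (show {z : ℝ × ℝ | z.1 ≤ u ∧ z.2 ≤ v} ⊆ {z : ℝ × ℝ | z.1 ≤ u} from
        fun z hz => hz.1) hCmeas.nullMeasurableSet (measure_ne_top γ _),
      ← coupling_fst h1 u]
    refine tsub_le_tsub_left (le_min ?_ ?_) _
    · exact measure_mono (fun z hz => hz.1)
    · rw [← coupling_snd h2 v]; exact measure_mono (fun z hz => hz.2)
  have hgB : ν (Iic u) - min (μ (Iic v)) (ν (Iic u)) ≤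
      γ {z : ℝ × ℝ | z.2 ≤ u ∧ v < z.1} := by
    rw [hB, measure_diff (show {z : ℝ × ℝ | z.1 ≤ v ∧ z.2 ≤ u} ⊆ {z : ℝ × ℝ | z.2 ≤ u} from
        fun z hz => hz.2) hDmeas.nullMeasurableSet (measure_ne_top γ _),
      ← coupling_snd h2 u]
    refine tsub_le_tsub_left (le_min ?_ ?_) _
    · rw [← coupling_fst h1 v]; exact measure_mono (fun z hz => hz.1)
    · exact measure_mono (fun z hz => hz.2)
  exact add_le_add hgA hgB

lemma gamma_star_eq (μ ν : Measure ℝ) [IsProbabilityMeasure μ] [IsProbabilityMeasure ν]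
    {u v : ℝ} (huv : u ≤ v) :
    ((volume.restrict (Ioo (0:ℝ) 1)).map (fun t => (qh μ t, qh ν t))) (dset (u, v)) =
      (μ (Iic u) - min (μ (Iic u)) (ν (Iic v))) +
        (ν (Iic u) - min (μ (Iic v)) (ν (Iic u))) := by
  have hpair : Measurable (fun t => (qh μ t, qh ν t)) :=
    (measurable_qh μ).prodMk (measurable_qh ν)
  have hAmeas : MeasurableSet {z : ℝ × ℝ | z.1 ≤ u ∧ v < z.2} :=
    (measurableSet_le measurable_fst measurable_const).inter
      (measurableSet_lt measurable_const measurable_snd)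
  have hBmeas : MeasurableSet {z : ℝ × ℝ | z.2 ≤ u ∧ v < z.1} :=
    (measurableSet_le measurable_snd measurable_const).inter
      (measurableSet_lt measurable_const measurable_fst)
  have hdisj : Disjoint {z : ℝ × ℝ | z.1 ≤ u ∧ v < z.2} {z : ℝ × ℝ | z.2 ≤ u ∧ v < z.1} := by
    rw [disjoint_left]
    rintro z ⟨hz1, _⟩ ⟨_, hz4⟩
    exact absurd (lt_of_le_of_lt (le_trans hz1 huv) hz4) (lt_irrefl z.1)
  rw [dset_eq_union, measure_union hdisj hBmeas]
  have hA : ((volume.restrict (Ioo (0:ℝ) 1)).map (fun t => (qh μ t, qh ν t)))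
      {z : ℝ × ℝ | z.1 ≤ u ∧ v < z.2} = μ (Iic u) - ν (Iic v) := by
    rw [Measure.map_apply hpair hAmeas, Measure.restrict_apply (hpair hAmeas)]
    have hset : (fun t => (qh μ t, qh ν t)) ⁻¹' {z : ℝ × ℝ | z.1 ≤ u ∧ v < z.2} ∩ Ioo (0:ℝ) 1 =
        Ioo (0:ℝ) 1 ∩ (Iic (cdf μ u) ∩ Ioi (cdf ν v)) := by
      ext t
      by_cases ht : t ∈ Ioo (0:ℝ) 1
      · have e1 : qh μ t ≤ u ↔ t ≤ cdf μ u := qh_le_iff ht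
        have e2 : v < qh ν t ↔ cdf ν v < t := by
          rw [← not_le, ← not_le, not_iff_not]
          exact qh_le_iff ht
        simp only [mem_inter_iff, mem_preimage, mem_setOf_eq, ht, and_true, true_and,
          mem_Iic, mem_Ioi, e1, e2]
      · simp [ht]
    rw [hset, vol_Ioo_inter (cdf_nonneg' μ u) (cdf_le_one' μ u) (cdf_nonneg' ν v),
      ofReal_cdf', ofReal_cdf']
  have hB : ((volume.restrict (Ioo (0:ℝ) 1)).map (fun t => (qh μ t, qh ν t)))
      {z : ℝ × ℝ | z.2 ≤ u ∧ v < z.1} = ν (Iic u) - μ (Iic v) := by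
    rw [Measure.map_apply hpair hBmeas, Measure.restrict_apply (hpair hBmeas)]
    have hset : (fun t => (qh μ t, qh ν t)) ⁻¹' {z : ℝ × ℝ | z.2 ≤ u ∧ v < z.1} ∩ Ioo (0:ℝ) 1 =
        Ioo (0:ℝ) 1 ∩ (Iic (cdf ν u) ∩ Ioi (cdf μ v)) := by
      ext t
      by_cases ht : t ∈ Ioo (0:ℝ) 1
      · have e1 : qh ν t ≤ u ↔ t ≤ cdf ν u := qh_le_iff ht
        have e2 : v < qh μ t ↔ cdf μ v < t := by
          rw [← not_le, ← not_le, not_iff_not]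
          exact qh_le_iff ht
        simp only [mem_inter_iff, mem_preimage, mem_setOf_eq, ht, and_true, true_and,
          mem_Iic, mem_Ioi, e1, e2]
      · simp [ht]
    rw [hset, vol_Ioo_inter (cdf_nonneg' ν u) (cdf_le_one' ν u) (cdf_nonneg' μ v),
      ofReal_cdf', ofReal_cdf']
  rw [hA, hB, tsub_min, min_comm (μ (Iic v)), tsub_min]


lemma abs_sub_rpow_le {p : ℝ} (hp : 0 ≤ p) (a b : ℝ) :
    |a - b| ^ p ≤ 2 ^ p * (|a| ^ p + |b| ^ p) := by
  have h1 : |a - b| ≤ 2 * max |a| |b| := by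
    have h0 : |a - b| ≤ |a| + |b| := by
      have := abs_add_le a (-b)
      simpa [sub_eq_add_neg] using this
    refine h0.trans ?_
    rcases le_total |a| |b| with h | h
    · rw [max_eq_right h]; linarith
    · rw [max_eq_left h]; linarith
  calc |a - b| ^ p ≤ (2 * max |a| |b|) ^ p := Real.rpow_le_rpow (abs_nonneg _) h1 hp
    _ = 2 ^ p * (max |a| |b|) ^ p :=
        Real.mul_rpow (by norm_num) (le_max_iff.mpr (Or.inl (abs_nonneg _)))
    _ ≤ 2 ^ p * (|a| ^ p + |b| ^ p) := by
        refine mul_le_mul_of_nonneg_left ?_ (Real.rpow_nonneg (by norm_num) p)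
        rcases le_total |a| |b| with h | h
        · rw [max_eq_right h]
          exact le_add_of_nonneg_left (Real.rpow_nonneg (abs_nonneg _) _)
        · rw [max_eq_left h]
          exact le_add_of_nonneg_right (Real.rpow_nonneg (abs_nonneg _) _)

end aux

/-- W_p^p(μ,ν) = ∫₀¹ |F_μ⁻¹(t) − F_ν⁻¹(t)|^p dt for probability measures on ℝ
with finite p-th moment. -/
theorem stmt0 (p : ℝ) (hp : 1 ≤ p) (μ ν : Measure ℝ)
    [IsProbabilityMeasure μ] [IsProbabilityMeasure ν]
    (hμ : ∫⁻ x, ENNReal.ofReal (|x| ^ p) ∂μ < ⊤)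
    (hν : ∫⁻ x, ENNReal.ofReal (|x| ^ p) ∂ν < ⊤) :
    Wcost p μ ν =
      ENNReal.ofReal (∫ t in Set.Ioo (0 : ℝ) 1, |quantile μ t - quantile ν t| ^ p) := by
  have hp0 : (0:ℝ) ≤ p := by linarith
  set Q : ℝ → ℝ × ℝ := fun t => (qh μ t, qh ν t) with hQ
  have hQm : Measurable Q := (measurable_qh μ).prodMk (measurable_qh ν)
  set γs : Measure (ℝ × ℝ) := (volume.restrict (Ioo (0:ℝ) 1)).map Q with hγs
  have hfst : γs.map Prod.fst = μ := by
    rw [hγs, Measure.map_map measurable_fst hQm]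
    exact map_qh μ
  have hsnd : γs.map Prod.snd = ν := by
    rw [hγs, Measure.map_map measurable_snd hQm]
    exact map_qh ν
  have hγsprob : IsProbabilityMeasure γs := coupling_finite hfst
  have hmem : γs ∈ {γ : Measure (ℝ × ℝ) | γ.map Prod.fst = μ ∧ γ.map Prod.snd = ν} :=
    ⟨hfst, hsnd⟩
  have hcost_meas : Measurable fun z : ℝ × ℝ => ENNReal.ofReal (dist z.1 z.2) ^ p :=
    (measurable_fst.dist measurable_snd).ennreal_ofReal.pow measurable_const
  have habs_meas : Measurable fun t => ENNReal.ofReal (|qh μ t - qh ν t| ^ p) :=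
    (((measurable_qh μ).sub (measurable_qh ν)).abs.pow measurable_const).ennreal_ofReal
  have hγs_cost : ∫⁻ z, ENNReal.ofReal (dist z.1 z.2) ^ p ∂γs
      = ∫⁻ t in Ioo (0:ℝ) 1, ENNReal.ofReal (|qh μ t - qh ν t| ^ p) := by
    rw [hγs, lintegral_map hcost_meas hQm]
    refine lintegral_congr fun t => ?_
    rw [Real.dist_eq, ← ENNReal.ofReal_rpow_of_nonneg (abs_nonneg _) hp0]
  set C := ∫⁻ t in Ioo (0:ℝ) 1, ENNReal.ofReal (|qh μ t - qh ν t| ^ p) with hC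
  have hax : Measurable fun x : ℝ => ENNReal.ofReal (|x| ^ p) :=
    (measurable_id.abs.pow measurable_const).ennreal_ofReal
  have hmarg1 : ∫⁻ t in Ioo (0:ℝ) 1, ENNReal.ofReal (|qh μ t| ^ p)
      = ∫⁻ x, ENNReal.ofReal (|x| ^ p) ∂μ := by
    conv_rhs => rw [← map_qh μ]
    rw [lintegral_map hax (measurable_qh μ)]
  have hmarg2 : ∫⁻ t in Ioo (0:ℝ) 1, ENNReal.ofReal (|qh ν t| ^ p)
      = ∫⁻ x, ENNReal.ofReal (|x| ^ p) ∂ν := by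
    conv_rhs => rw [← map_qh ν]
    rw [lintegral_map hax (measurable_qh ν)]
  have hCfin : C < ⊤ := by
    have hb : C ≤ ENNReal.ofReal (2 ^ p) *
        ((∫⁻ t in Ioo (0:ℝ) 1, ENNReal.ofReal (|qh μ t| ^ p)) +
          ∫⁻ t in Ioo (0:ℝ) 1, ENNReal.ofReal (|qh ν t| ^ p)) := by
      rw [hC]
      calc ∫⁻ t in Ioo (0:ℝ) 1, ENNReal.ofReal (|qh μ t - qh ν t| ^ p)
          ≤ ∫⁻ t in Ioo (0:ℝ) 1,
              ENNReal.ofReal (2 ^ p) *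
                (ENNReal.ofReal (|qh μ t| ^ p) + ENNReal.ofReal (|qh ν t| ^ p)) := by
            refine lintegral_mono fun t => ?_
            rw [← ENNReal.ofReal_add (Real.rpow_nonneg (abs_nonneg _) _)
              (Real.rpow_nonneg (abs_nonneg _) _),
              ← ENNReal.ofReal_mul (Real.rpow_nonneg (by norm_num) _)]
            exact ENNReal.ofReal_le_ofReal (abs_sub_rpow_le hp0 _ _)
        _ = ENNReal.ofReal (2 ^ p) *
            ((∫⁻ t in Ioo (0:ℝ) 1, ENNReal.ofReal (|qh μ t| ^ p)) +
              ∫⁻ t in Ioo (0:ℝ) 1, ENNReal.ofReal (|qh ν t| ^ p)) := by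
            rw [lintegral_const_mul' _ _ ENNReal.ofReal_ne_top,
              lintegral_add_left ((measurable_qh μ).abs.pow measurable_const).ennreal_ofReal]
    refine lt_of_le_of_lt hb ?_
    rw [hmarg1, hmarg2]
    exact ENNReal.mul_lt_top ENNReal.ofReal_lt_top (ENNReal.add_lt_top.mpr ⟨hμ, hν⟩)
  have hlow : ∀ γ' ∈ {γ : Measure (ℝ × ℝ) | γ.map Prod.fst = μ ∧ γ.map Prod.snd = ν},
      C ≤ ∫⁻ z, ENNReal.ofReal (dist z.1 z.2) ^ p ∂γ' := by
    rintro γ' ⟨h1, h2⟩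
    have : IsProbabilityMeasure γ' := coupling_finite h1
    rw [← hγs_cost, cost_eq hp γ', cost_eq hp γs]
    refine lintegral_mono_ae ?_
    have hae : ∀ᵐ w ∂(kmeas p), w.1 ≤ w.2 := by
      rw [ae_iff]
      have : {w : ℝ × ℝ | ¬ w.1 ≤ w.2} = {w : ℝ × ℝ | w.2 < w.1} := by
        ext w; simp [not_le]
      rw [this]
      exact kmeas_bad p
    filter_upwards [hae] with w hw
    have e : dset w = dset (w.1, w.2) := rfl
    rw [e, hγs, gamma_star_eq μ ν hw]
    exact coupling_ge h1 h2 hw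
  have hW : Wcost p μ ν = C := by
    refine le_antisymm ?_ (le_iInf₂ hlow)
    calc Wcost p μ ν ≤ ∫⁻ z, ENNReal.ofReal (dist z.1 z.2) ^ p ∂γs := iInf₂_le γs hmem
      _ = C := hγs_cost
  rw [hW]
  have hnonneg : 0 ≤ᵐ[volume.restrict (Ioo (0:ℝ) 1)] fun t => |qh μ t - qh ν t| ^ p :=
    ae_of_all _ fun t => Real.rpow_nonneg (abs_nonneg _) p
  have hint : Integrable (fun t => |qh μ t - qh ν t| ^ p) (volume.restrict (Ioo (0:ℝ) 1)) := by
    refine ⟨(((measurable_qh μ).sub (measurable_qh ν)).abs.pow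
      measurable_const).aestronglyMeasurable, ?_⟩
    rw [hasFiniteIntegral_iff_ofReal hnonneg]
    exact hCfin
  have hcongr : ∫ t in Ioo (0:ℝ) 1, |quantile μ t - quantile ν t| ^ p
      = ∫ t in Ioo (0:ℝ) 1, |qh μ t - qh ν t| ^ p :=
    setIntegral_congr_fun measurableSet_Ioo fun t ht => by rw [qh_eq ht, qh_eq ht]
  rw [hcongr, ofReal_integral_eq_lintegral_ofReal hint hnonneg]
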